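/- Let γ > 0 and let Q : ℝ → ℝ be any continuous function with 0 ≤ Q(x) ≤ 1 for all x, Q(x) = 1 for x ≤ −1, and Q(x) = 0 for x ≥ 1 (a continuous conversion of the one-dimensional copy-negation function f(s) = ¬s). Let x : [0,∞) → ℝ be differentiable with ẋ(t) = γ·(g(x(t)) + 6·Q(x(t))) for all t ≥ 0. Then the discretized state (0 if x(t) ≤ 0, 1 if x(t) > 0) changes value at most once: there do not exist times 0 ≤ t₁ < t₂ < t₃ such that either (x(t₁) ≤ 0 and x(t₂) > 0 and x(t₃) ≤ 0) or (x(t₁) > 0 and x(t₂) ≤ 0 and x(t₃) > 0). In particular no trajectory of D₁(f,γ,Q) can track the Boolean trajectory 0 ↦ 1 ↦ 0 ↦ 1 ↦ ⋯ of copy-negation. -/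

import Mathlib

/-!
Solutions of a scalar autonomous equation `ẋ = F(x)` are monotone, for an arbitrary
(not even continuous) `F`. If `x` crosses a level `y` downwards, the fence `x ≥ y` was
not kept, so `F y ≤ 0`. At a strict peak `x a < x b > x c`, every level just below `x b`
is crossed downwards on `[b, c]`, so `F ≤ 0` there; then a fence of small positive slope
starting just below `x b` at time `a` keeps `x` strictly below `x b` up to time `b`.
A monotone trajectory changes sign at most once.
-/

/-- The cubic `g(x) = 3x - x³ - 3`. -/
noncomputable def gcub (x : ℝ) : ℝ := 3 * x - x ^ 3 - 3

open Set

section AutonomousODE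

variable {F x : ℝ → ℝ} {a b c y : ℝ}

lemma nonpos_of_hasDerivAt_of_crosses_down (hab : a ≤ b)
    (hx : ∀ t ∈ Icc a b, HasDerivAt x (F (x t)) t) (hyb : x b < y) (hya : y < x a) :
    F y ≤ 0 := by
  by_contra! hFy
  have fence : -x b ≤ -y :=
    image_le_of_deriv_right_lt_deriv_boundary' (f := fun t => -x t) (B := fun _ => -y)
      (fun t ht => (hx t ht).continuousAt.neg.continuousWithinAt)
      (fun t ht => (hx t (Ico_subset_Icc_self ht)).neg.hasDerivWithinAt)
      (neg_le_neg hya.le) continuousOn_const (fun _ _ => hasDerivWithinAt_const _ _ _)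
      (fun t _ hxt => by rw [neg_inj.mp hxt]; linarith) ⟨hab, le_rfl⟩
  linarith

lemma not_strict_peak_of_hasDerivAt (hab : a < b) (hbc : b < c)
    (hx : ∀ t ∈ Icc a c, HasDerivAt x (F (x t)) t) (hxa : x a < x b) (hxc : x c < x b) :
    False := by
  obtain ⟨L, hL⟩ := exists_between (max_lt hxa hxc)
  have hFle : ∀ z ∈ Ioo (x c) (x b), F z ≤ 0 := fun z hz =>
    nonpos_of_hasDerivAt_of_crosses_down hbc.le
      (fun t ht => hx t ⟨hab.le.trans ht.1, ht.2⟩) hz.1 hz.2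
  obtain ⟨ε, hε, hεb⟩ : ∃ ε > 0, ε * (b - a) < x b - L :=
    ⟨(x b - L) / (2 * (b - a)), div_pos (by linarith) (by linarith), by
      have := sub_pos.mpr hab; field_simp; linarith⟩
  have fence : x b ≤ L + ε * (b - a) :=
    image_le_of_deriv_right_lt_deriv_boundary' (B := fun t => L + ε * (t - a))
      (fun t ht => (hx t ⟨ht.1, ht.2.trans hbc.le⟩).continuousAt.continuousWithinAt)
      (fun t ht => (hx t ⟨ht.1, ht.2.le.trans hbc.le⟩).hasDerivWithinAt)
      (by simp only [sub_self, mul_zero, add_zero]; exact (le_max_left _ _).trans hL.1.le)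
      (by fun_prop)
      (fun t _ => (((hasDerivAt_id t).sub_const a).const_mul ε).const_add L
        |>.hasDerivWithinAt |>.congr_deriv (mul_one ε))
      (fun t ht hxt => by
        have hεt : ε * (t - a) ≤ ε * (b - a) := by gcongr; exact ht.2.le
        have hεt₀ : 0 ≤ ε * (t - a) := mul_nonneg hε.le (sub_nonneg.mpr ht.1)
        rw [hxt]
        refine (hFle _ ⟨?_, ?_⟩).trans_lt hε
        · linarith [le_max_right (x a) (x c)]
        · linarith)
      ⟨hab.le, le_rfl⟩
  linarith

lemma not_strict_valley_of_hasDerivAt (hab : a < b) (hbc : b < c)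
    (hx : ∀ t ∈ Icc a c, HasDerivAt x (F (x t)) t) (hxa : x b < x a) (hxc : x b < x c) :
    False :=
  not_strict_peak_of_hasDerivAt (F := fun z => -F (-z)) (x := -x) hab hbc
    (fun t ht => by simpa only [Pi.neg_apply, neg_neg] using (hx t ht).neg)
    (neg_lt_neg hxa) (neg_lt_neg hxc)

theorem monotoneOn_or_antitoneOn_of_hasDerivAt {s : Set ℝ} (hs : s.OrdConnected)
    (hx : ∀ t ∈ s, HasDerivAt x (F (x t)) t) : MonotoneOn x s ∨ AntitoneOn x s := by
  by_contra! h
  obtain ⟨a, ha, b, -, c, hc, hab, hbc, hpeak | hvalley⟩ :=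
    not_monotoneOn_not_antitoneOn_iff_exists_lt_lt.mp h
  · exact not_strict_peak_of_hasDerivAt hab hbc (fun t ht => hx t (hs.out ha hc ht))
      hpeak.1 hpeak.2
  · exact not_strict_valley_of_hasDerivAt hab hbc (fun t ht => hx t (hs.out ha hc ht))
      hvalley.1 hvalley.2

end AutonomousODE

theorem stmt_18_general (γ : ℝ) (Q : ℝ → ℝ) (x : ℝ → ℝ)
    (hx : ∀ t : ℝ, 0 ≤ t → HasDerivAt x (γ * (gcub (x t) + 6 * Q (x t))) t) :
    ¬ ∃ t1 t2 t3 : ℝ, 0 ≤ t1 ∧ t1 < t2 ∧ t2 < t3 ∧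
      ((x t1 ≤ 0 ∧ 0 < x t2 ∧ x t3 ≤ 0) ∨
       (0 < x t1 ∧ x t2 ≤ 0 ∧ 0 < x t3)) := by
  rintro ⟨t1, t2, t3, ht1, h12, h23, hsigns⟩
  have ht2 : t2 ∈ Ici (0 : ℝ) := mem_Ici.mpr (ht1.trans h12.le)
  have ht3 : t3 ∈ Ici (0 : ℝ) := mem_Ici.mpr (ht2.out.trans h23.le)
  rcases monotoneOn_or_antitoneOn_of_hasDerivAt (F := fun z => γ * (gcub z + 6 * Q z))
    ordConnected_Ici hx with hmono | hanti
  · have := hmono ht1 ht2 h12.le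
    have := hmono ht2 ht3 h23.le
    rcases hsigns with h | h <;> linarith
  · have := hanti ht1 ht2 h12.le
    have := hanti ht2 ht3 h23.le
    rcases hsigns with h | h <;> linarith

/-- Section 5.2 of the paper: for any continuous conversion
`Q` of the one-dimensional copy-negation function (`Q = 1` on `(-∞,-1]`,
`Q = 0` on `[1,∞)`, values in `[0,1]`) and any `γ > 0`, the discretized state
of a solution of `ẋ = γ (g(x) + 6 Q(x))` changes value at most once; in
particular no trajectory of `D₁(¬, γ, Q)` can track `0 ↦ 1 ↦ 0 ↦ 1 ↦ ⋯`. -/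
theorem stmt_18 (γ : ℝ) (hγ : 0 < γ)
    (Q : ℝ → ℝ) (hQc : Continuous Q) (hQ01 : ∀ z, Q z ∈ Set.Icc (0 : ℝ) 1)
    (hQ0 : ∀ z : ℝ, z ≤ -1 → Q z = 1) (hQ1 : ∀ z : ℝ, 1 ≤ z → Q z = 0)
    (x : ℝ → ℝ)
    (hx : ∀ t : ℝ, 0 ≤ t → HasDerivAt x (γ * (gcub (x t) + 6 * Q (x t))) t) :
    ¬ ∃ t1 t2 t3 : ℝ, 0 ≤ t1 ∧ t1 < t2 ∧ t2 < t3 ∧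
      ((x t1 ≤ 0 ∧ 0 < x t2 ∧ x t3 ≤ 0) ∨
       (0 < x t1 ∧ x t2 ≤ 0 ∧ 0 < x t3)) :=
  stmt_18_general γ Q x hx
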